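/- arXiv:2111.15482 — 2 statements merged into one kernel-verified Lean document; each statement's English description precedes it below -/
import Mathlib

section
/- Let m : ℝ³ → ℝ³ be four times continuously differentiable (ContDiff ℝ 4) with ‖m(x)‖ = 1 for all x ∈ ℝ³. Then for every x ∈ ℝ³: −⟪m(x), Δ²m(x)⟫ = ‖Δm(x)‖² + Δ(y ↦ Σ_{k=1}^{3} ‖∂_k m(y)‖²)(x) + 2 Σ_{k=1}^{3} ⟪∂_k m(x), ∂_k(Δm)(x)⟫. -/
/-!
Differentiating `⟪m, m⟫ = 1` twice with the Leibniz rule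
`Δ⟪f, g⟫ = ⟪f, Δg⟫ + 2 Σₖ ⟪∂ₖf, ∂ₖg⟫ + ⟪Δf, g⟫` gives `⟪m, Δm⟫ = -Σₖ ‖∂ₖm‖²`.
Taking the Laplacian of this and applying the Leibniz rule once more, now to `⟪m, Δm⟫`,
leaves `⟪m, Δ²m⟫` expressed through `‖Δm‖²`, `Δ Σₖ ‖∂ₖm‖²` and `Σₖ ⟪∂ₖm, ∂ₖΔm⟫`.
-/

open scoped RealInnerProductSpace

noncomputable section

/-- ℝ³ as a Euclidean space. -/
abbrev E3 := EuclideanSpace ℝ (Fin 3)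

/-- Partial derivative in the `k`-th standard coordinate direction. -/
noncomputable def pd {F : Type*} [NormedAddCommGroup F] [NormedSpace ℝ F]
    (k : Fin 3) (f : E3 → F) (x : E3) : F :=
  fderiv ℝ f x (EuclideanSpace.single k 1)

/-- Componentwise Laplacian `Δf = Σ_k ∂_k ∂_k f`. -/
noncomputable def lap {F : Type*} [NormedAddCommGroup F] [NormedSpace ℝ F]
    (f : E3 → F) (x : E3) : F :=
  ∑ k : Fin 3, pd k (pd k f) x

section

variable {F : Type*} [NormedAddCommGroup F] [NormedSpace ℝ F]

theorem ContDiff.pd {n : WithTop ℕ∞} {f : E3 → F} (hf : ContDiff ℝ (n + 1) f) (k : Fin 3) :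
    ContDiff ℝ n (pd k f) :=
  (hf.fderiv_right le_rfl).clm_apply contDiff_const

theorem ContDiff.lap {n : WithTop ℕ∞} {f : E3 → F} (hf : ContDiff ℝ (n + 2) f) :
    ContDiff ℝ n (lap f) := by
  have hf' : ContDiff ℝ (n + 1 + 1) f := by rwa [add_assoc, one_add_one_eq_two]
  exact ContDiff.sum fun k _ => (hf'.pd k).pd k

theorem pd_add {f g : E3 → F} {x : E3} (hf : DifferentiableAt ℝ f x)
    (hg : DifferentiableAt ℝ g x) (k : Fin 3) :
    pd k (fun y => f y + g y) x = pd k f x + pd k g x := by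
  simp only [pd, fderiv_fun_add hf hg, add_apply]

@[simp]
theorem pd_neg (f : E3 → F) (k : Fin 3) : pd k (fun y => -f y) = fun x => -pd k f x := by
  funext x
  simp only [pd, fderiv_fun_neg, neg_apply]

@[simp]
theorem pd_const (c : F) (k : Fin 3) : pd k (fun _ : E3 => c) = fun _ => 0 := by
  funext x
  simp only [pd, fderiv_const_apply, zero_apply]

theorem lap_neg (f : E3 → F) (x : E3) : lap (fun y => -f y) x = -lap f x := by
  simp only [lap, pd_neg, Finset.sum_neg_distrib]

theorem lap_const (c : F) (x : E3) : lap (fun _ : E3 => c) x = 0 := by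
  simp only [lap, pd_const, Finset.sum_const_zero]

end

section

variable {F : Type*} [NormedAddCommGroup F] [InnerProductSpace ℝ F]

theorem pd_inner {f g : E3 → F} {x : E3} (hf : DifferentiableAt ℝ f x)
    (hg : DifferentiableAt ℝ g x) (k : Fin 3) :
    pd k (fun y => ⟪f y, g y⟫) x = ⟪f x, pd k g x⟫ + ⟪pd k f x, g x⟫ :=
  fderiv_inner_apply ℝ hf hg _

theorem pd_pd_inner {f g : E3 → F} (hf : ContDiff ℝ 2 f) (hg : ContDiff ℝ 2 g)
    (k : Fin 3) (x : E3) :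
    pd k (pd k (fun y => ⟪f y, g y⟫)) x
      = ⟪f x, pd k (pd k g) x⟫ + 2 * ⟪pd k f x, pd k g x⟫ + ⟪pd k (pd k f) x, g x⟫ := by
  have hfd : Differentiable ℝ f := hf.differentiable two_ne_zero
  have hgd : Differentiable ℝ g := hg.differentiable two_ne_zero
  have hfd' : Differentiable ℝ (pd k f) := (hf.pd k).differentiable one_ne_zero
  have hgd' : Differentiable ℝ (pd k g) := (hg.pd k).differentiable one_ne_zero
  have hfirst : pd k (fun y => ⟪f y, g y⟫) = fun y => ⟪f y, pd k g y⟫ + ⟪pd k f y, g y⟫ :=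
    funext fun y => pd_inner (hfd y) (hgd y) k
  rw [hfirst, pd_add ((hfd x).inner ℝ (hgd' x)) ((hfd' x).inner ℝ (hgd x)),
    pd_inner (hfd x) (hgd' x), pd_inner (hfd' x) (hgd x)]
  ring

theorem lap_inner {f g : E3 → F} (hf : ContDiff ℝ 2 f) (hg : ContDiff ℝ 2 g) (x : E3) :
    lap (fun y => ⟪f y, g y⟫) x
      = ⟪f x, lap g x⟫ + 2 * ∑ k : Fin 3, ⟪pd k f x, pd k g x⟫ + ⟪lap f x, g x⟫ := by
  simp only [lap, pd_pd_inner hf hg, inner_sum, sum_inner, Finset.mul_sum,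
    Finset.sum_add_distrib]

theorem inner_lap_eq_neg_sum_norm_pd_sq {m : E3 → F} (hm : ContDiff ℝ 2 m)
    (hunit : ∀ x, ‖m x‖ = 1) (x : E3) :
    ⟪m x, lap m x⟫ = -∑ k : Fin 3, ‖pd k m x‖ ^ 2 := by
  have hlap := lap_inner hm hm x
  simp only [real_inner_self_eq_norm_sq, hunit, one_pow, lap_const,
    real_inner_comm (m x) (lap m x)] at hlap
  linarith

end

/-- The Lagrange multiplier identity `Λ = -m·Δ²m = |Δm|² + Δ|∇m|² + 2∇m·∇Δm`
for unit-length fields. -/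
theorem lagrange_multiplier_identity (m : E3 → E3) (hm : ContDiff ℝ 4 m)
    (hunit : ∀ x, ‖m x‖ = 1) (x : E3) :
    -⟪m x, lap (lap m) x⟫ =
      ‖lap m x‖ ^ 2 + lap (fun y => ∑ k : Fin 3, ‖pd k m y‖ ^ 2) x
        + 2 * ∑ k : Fin 3, ⟪pd k m x, pd k (lap m) x⟫ := by
  have hm2 : ContDiff ℝ 2 m := hm.of_le (by norm_num)
  have hlapm : ContDiff ℝ 2 (lap m) := ContDiff.lap (n := 2) hm
  have hleibniz := lap_inner hm2 hlapm x
  simp only [inner_lap_eq_neg_sum_norm_pd_sq hm2 hunit, lap_neg,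
    real_inner_self_eq_norm_sq] at hleibniz
  linarith
end
end

section
/- Let m : ℝ × ℝ³ → ℝ³ be twice continuously differentiable (ContDiff ℝ 2) with ‖m(t,x)‖ = 1 for all (t,x). Define e_i(t,x) := ⟪m, ∂_i m × ∂_t m⟫(t,x) for i = 1,2,3 and b(t,x) := (⟪m, ∂₂m × ∂₃m⟫, ⟪m, ∂₃m × ∂₁m⟫, ⟪m, ∂₁m × ∂₂m⟫)(t,x), where ∂_i are the spatial partial derivatives and ∂_t the time derivative. Then Faraday's law holds pointwise: ∂_t b + ∇ × e = 0, i.e., ∂_t b₁ + ∂₂e₃ − ∂₃e₂ = 0, ∂_t b₂ + ∂₃e₁ − ∂₁e₃ = 0, and ∂_t b₃ + ∂₁e₂ − ∂₂e₁ = 0 at every (t,x). -/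
open scoped RealInnerProductSpace

noncomputable section

/-- Space-time ℝ × ℝ³. -/
abbrev SpaceTime := ℝ × E3

/-- Time partial derivative. -/
noncomputable def pdT {F : Type*} [NormedAddCommGroup F] [NormedSpace ℝ F]
    (f : SpaceTime → F) (p : SpaceTime) : F :=
  fderiv ℝ f p ((1 : ℝ), (0 : E3))

/-- Spatial partial derivative in the `i`-th standard coordinate direction. -/
noncomputable def pdX {F : Type*} [NormedAddCommGroup F] [NormedSpace ℝ F]
    (i : Fin 3) (f : SpaceTime → F) (p : SpaceTime) : F :=
  fderiv ℝ f p ((0 : ℝ), EuclideanSpace.single i 1)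

/-- Cross product on ℝ³. -/
noncomputable def cross3 (a b : E3) : E3 :=
  (WithLp.equiv 2 (Fin 3 → ℝ)).symm
    (crossProduct ((WithLp.equiv 2 (Fin 3 → ℝ)) a) ((WithLp.equiv 2 (Fin 3 → ℝ)) b))

/-- Emergent electric field components `e_i = m·(∂_i m × ∂_t m)` (0-based index). -/
noncomputable def eField (m : SpaceTime → E3) (i : Fin 3) (p : SpaceTime) : ℝ :=
  ⟪m p, cross3 (pdX i m p) (pdT m p)⟫

/-- Emergent magnetic field components `b_i = ½ ε_{ijk} m·(∂_j m × ∂_k m)`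
(0-based indices: `bField m 0 = m·(∂₂m × ∂₃m)` etc.). -/
noncomputable def bField (m : SpaceTime → E3) : Fin 3 → SpaceTime → ℝ :=
  ![fun p => ⟪m p, cross3 (pdX 1 m p) (pdX 2 m p)⟫,
    fun p => ⟪m p, cross3 (pdX 2 m p) (pdX 0 m p)⟫,
    fun p => ⟪m p, cross3 (pdX 0 m p) (pdX 1 m p)⟫]

/-!
The emergent fields are the components of the pull-back `F = m^*ω` of the area form `ω` of the
unit sphere, `F_vw = m·(∂_v m × ∂_w m)`, and Faraday's law is the Bianchi identity `dF = 0`.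
Concretely, differentiating `F` produces two kinds of terms. The first-order ones are triple
products of three derivatives of `m`, all orthogonal to `m` since `‖m‖ = 1`, so they lie in a
plane and vanish. The second-order ones cancel in pairs in the cyclic sum by antisymmetry of the
cross product and symmetry of the second derivative.
-/

def crossBilin : E3 →L[ℝ] E3 →L[ℝ] E3 :=
  let e := WithLp.linearEquiv 2 ℝ (Fin 3 → ℝ)
  ((crossProduct.compl₁₂ e.toLinearMap e.toLinearMap).compr₂
    e.symm.toLinearMap).toContinuousBilinearMap

lemma crossBilin_apply (a b : E3) : crossBilin a b = cross3 a b := rfl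

lemma cross3_anticomm (a b : E3) : cross3 b a = -cross3 a b := by
  rw [cross3, cross3, ← cross_anticomm]
  rfl

lemma inner_cross3_mul_inner_self (n a b c : E3) :
    ⟪a, cross3 b c⟫ * ⟪n, n⟫ =
      ⟪n, a⟫ * ⟪n, cross3 b c⟫ + ⟪n, b⟫ * ⟪n, cross3 c a⟫ + ⟪n, c⟫ * ⟪n, cross3 a b⟫ := by
  simp only [PiLp.inner_apply, RCLike.inner_apply, conj_trivial, Fin.sum_univ_three, cross3,
    cross_apply, WithLp.equiv_symm_apply, WithLp.equiv_apply,
    Matrix.cons_val_zero, Matrix.cons_val_one, Matrix.cons_val_two, Matrix.head_cons,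
    Matrix.tail_cons]
  ring

lemma inner_cross3_eq_zero_of_inner_eq_zero {n a b c : E3} (hn : n ≠ 0) (ha : ⟪n, a⟫ = 0)
    (hb : ⟪n, b⟫ = 0) (hc : ⟪n, c⟫ = 0) : ⟪a, cross3 b c⟫ = 0 := by
  have h := inner_cross3_mul_inner_self n a b c
  rw [ha, hb, hc] at h
  simpa [hn] using h

section Calculus

variable {E : Type*} [NormedAddCommGroup E] [NormedSpace ℝ E]

lemma fderiv_cross3_apply {f g : E → E3} {x : E} (hf : DifferentiableAt ℝ f x)
    (hg : DifferentiableAt ℝ g x) (y : E) :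
    fderiv ℝ (fun q => cross3 (f q) (g q)) x y =
      cross3 (fderiv ℝ f x y) (g x) + cross3 (f x) (fderiv ℝ g x y) := by
  simp_rw [← crossBilin_apply]
  rw [crossBilin.fderiv_of_bilinear hf hg]
  simp [crossBilin_apply, add_comm]

lemma DifferentiableAt.cross3 {f g : E → E3} {x : E} (hf : DifferentiableAt ℝ f x)
    (hg : DifferentiableAt ℝ g x) : DifferentiableAt ℝ (fun q => cross3 (f q) (g q)) x :=
  (crossBilin.hasFDerivAt_of_bilinear hf.hasFDerivAt hg.hasFDerivAt).differentiableAt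

lemma fderiv_fderiv_apply_const {F : Type*} [NormedAddCommGroup F] [NormedSpace ℝ F]
    {m : E → F} {p : E} (h : DifferentiableAt ℝ (fderiv ℝ m) p) (u v : E) :
    fderiv ℝ (fun q => fderiv ℝ m q v) p u = fderiv ℝ (fderiv ℝ m) p u v := by
  rw [fderiv_clm_apply h (differentiableAt_const v)]
  simp

lemma inner_fderiv_eq_zero_of_norm_eq_const {F : Type*} [NormedAddCommGroup F]
    [InnerProductSpace ℝ F] {m : E → F} {c : ℝ} (hc : ∀ q, ‖m q‖ = c) {p : E}
    (hm : DifferentiableAt ℝ m p) (u : E) : ⟪m p, fderiv ℝ m p u⟫ = 0 := by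
  have hconst : (fun q => ⟪m q, m q⟫) = fun _ => c ^ 2 := by
    funext q
    rw [real_inner_self_eq_norm_sq, hc q]
  have h := fderiv_inner_apply (𝕜 := ℝ) hm hm u
  rw [hconst, fderiv_fun_const, Pi.zero_apply, zero_apply,
    real_inner_comm (m p)] at h
  linarith

/-- In space-time, `e_i = F(∂_i, ∂_t)` and `b_i = ½ ε_ijk F(∂_j, ∂_k)`. -/
def emergentFieldTensor (m : E → E3) (v w : E) (q : E) : ℝ :=
  ⟪m q, cross3 (fderiv ℝ m q v) (fderiv ℝ m q w)⟫

lemma emergentFieldTensor_swap (m : E → E3) (v w : E) :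
    emergentFieldTensor m w v = -emergentFieldTensor m v w := by
  funext q
  simp only [emergentFieldTensor, Pi.neg_apply, cross3_anticomm (fderiv ℝ m q v), inner_neg_right]

lemma fderiv_emergentFieldTensor_apply {m : E → E3} (hm : ContDiff ℝ 2 m) (p u v w : E) :
    fderiv ℝ (emergentFieldTensor m v w) p u =
      ⟪fderiv ℝ m p u, cross3 (fderiv ℝ m p v) (fderiv ℝ m p w)⟫
      + ⟪m p, cross3 (fderiv ℝ (fderiv ℝ m) p u v) (fderiv ℝ m p w)⟫
      + ⟪m p, cross3 (fderiv ℝ m p v) (fderiv ℝ (fderiv ℝ m) p u w)⟫ := by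
  have hm' : DifferentiableAt ℝ m p := hm.differentiable two_ne_zero p
  have hdm : DifferentiableAt ℝ (fderiv ℝ m) p :=
    (hm.fderiv_right (m := 1) le_rfl).differentiable one_ne_zero p
  have hdmv (z : E) : DifferentiableAt ℝ (fun q => fderiv ℝ m q z) p :=
    hdm.clm_apply (differentiableAt_const z)
  unfold emergentFieldTensor
  rw [fderiv_inner_apply (𝕜 := ℝ) hm' ((hdmv v).cross3 (hdmv w)) u,
    fderiv_cross3_apply (hdmv v) (hdmv w), fderiv_fderiv_apply_const hdm,
    fderiv_fderiv_apply_const hdm, inner_add_right]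
  ring

theorem emergentFieldTensor_bianchi {m : E → E3} (hm : ContDiff ℝ 2 m)
    (hunit : ∀ q, ‖m q‖ = 1) (p u v w : E) :
    fderiv ℝ (emergentFieldTensor m v w) p u + fderiv ℝ (emergentFieldTensor m w u) p v
      + fderiv ℝ (emergentFieldTensor m u v) p w = 0 := by
  set D2 := fderiv ℝ (fderiv ℝ m) p
  have hsymm (x y : E) : D2 x y = D2 y x := hm.contDiffAt.isSymmSndFDerivAt (by simp) x y
  have hm0 : m p ≠ 0 := by
    rw [← norm_ne_zero_iff, hunit p]
    exact one_ne_zero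
  have horth := inner_fderiv_eq_zero_of_norm_eq_const hunit (hm.differentiable two_ne_zero p)
  have htriple (a b c : E) : ⟪fderiv ℝ m p a, cross3 (fderiv ℝ m p b) (fderiv ℝ m p c)⟫ = 0 :=
    inner_cross3_eq_zero_of_inner_eq_zero hm0 (horth a) (horth b) (horth c)
  rw [fderiv_emergentFieldTensor_apply hm, fderiv_emergentFieldTensor_apply hm,
    fderiv_emergentFieldTensor_apply hm, htriple, htriple, htriple, hsymm v u, hsymm w v,
    hsymm u w, cross3_anticomm (D2 u v), cross3_anticomm (D2 v w), cross3_anticomm (D2 w u)]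
  simp only [inner_neg_right]
  ring

end Calculus

/-- Faraday's law `∂_t b + ∇ × e = 0` for the emergent electromagnetic fields
of a smoothly evolving unit-length magnetization field. -/
theorem emergent_faraday_law (m : SpaceTime → E3) (hm : ContDiff ℝ 2 m)
    (hunit : ∀ p, ‖m p‖ = 1) (p : SpaceTime) :
    pdT (bField m 0) p + pdX 1 (eField m 2) p - pdX 2 (eField m 1) p = 0
    ∧ pdT (bField m 1) p + pdX 2 (eField m 0) p - pdX 0 (eField m 2) p = 0
    ∧ pdT (bField m 2) p + pdX 0 (eField m 1) p - pdX 1 (eField m 0) p = 0 := by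
  let t : SpaceTime := ((1 : ℝ), (0 : E3))
  let x (i : Fin 3) : SpaceTime := ((0 : ℝ), EuclideanSpace.single i 1)
  have faraday (i j : Fin 3) :
      pdT (emergentFieldTensor m (x i) (x j)) p + pdX i (eField m j) p
        - pdX j (eField m i) p = 0 := by
    change fderiv ℝ (emergentFieldTensor m (x i) (x j)) p t
      + fderiv ℝ (emergentFieldTensor m (x j) t) p (x i)
      - fderiv ℝ (emergentFieldTensor m (x i) t) p (x j) = 0
    rw [emergentFieldTensor_swap m t (x i), fderiv_neg, neg_apply, sub_neg_eq_add]
    exact emergentFieldTensor_bianchi hm hunit p t (x i) (x j)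
  exact ⟨faraday 1 2, faraday 2 0, faraday 0 1⟩
end
end
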